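/- arXiv:2108.11938 — 5 statements merged into one kernel-verified Lean document; each statement's English description precedes it below -/
import Mathlib

section
/- Let q(z) = Σ_{|k|≤K} b_k z^k be a trigonometric polynomial with complex coefficients such that q(z) > 0 for all z on the unit circle T. Then there exists a polynomial g(z) = Σ_{k=0}^K a_k z^k such that q(z) = |g(z)|² for all z ∈ T. -/
/-!
Multiplying `q` by `z ^ K` gives a polynomial `p` of degree at most `2K`, and since `q` is real
on the circle, `p` is self-inversive: `z ^ (2K) * conj (p (1 / conj z)) = p z`. Hence the nonzero
roots of `p` come in pairs `w`, `1 / conj w` of equal multiplicity, and none lies on the circle.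
For `|z| = 1` we have `|z - 1 / conj w| = |z - w| / |w|`, so
`|p z| = t * ∏ |z - w| ^ 2` over the nonzero roots `w` inside the disk, and
`g = √t * ∏ (X - w)` has degree at most `K` because these roots are at most half of all roots.
-/

open Polynomial ComplexConjugate

theorem ne_zero_of_norm_eq_one {E : Type*} [NormedAddCommGroup E] {x : E} (hx : ‖x‖ = 1) :
    x ≠ 0 :=
  norm_ne_zero_iff.mp (hx ▸ one_ne_zero)

theorem Complex.infinite_setOf_norm_eq_one : {z : ℂ | ‖z‖ = 1}.Infinite := by
  have h := (isPreconnected_sphere (E := ℂ) (by simp) 0 1).infinite_of_nontrivial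
    ⟨1, by simp, -1, by simp, by norm_num⟩
  simpa [Metric.sphere] using h

/-- Inversion in the unit circle; it fixes `0` because `(0 : ℂ)⁻¹ = 0`. -/
noncomputable def circleInversion (w : ℂ) : ℂ := (conj w)⁻¹

theorem circleInversion_involutive : Function.Involutive circleInversion := by
  intro w
  simp [circleInversion]

theorem norm_circleInversion (w : ℂ) : ‖circleInversion w‖ = ‖w‖⁻¹ := by
  simp [circleInversion]

theorem norm_sub_circleInversion {z w : ℂ} (hz : ‖z‖ = 1) (hw : w ≠ 0) :
    ‖z - circleInversion w‖ = ‖z - w‖ / ‖w‖ := by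
  have hz0 : z ≠ 0 := ne_zero_of_norm_eq_one hz
  have hw' : conj w ≠ 0 := by simpa using hw
  have key : z - circleInversion w = z * conj (w - z) * (conj w)⁻¹ := by
    rw [map_sub, mul_sub, ← Complex.inv_eq_conj hz, mul_inv_cancel₀ hz0, circleInversion]
    field_simp
  rw [key, norm_mul, norm_mul, norm_inv, hz, one_mul, Complex.norm_conj, Complex.norm_conj,
    norm_sub_rev, div_eq_mul_inv]

theorem Polynomial.pow_X_sub_C_inv_dvd_reflect {F : Type*} [Field F] {f : F[X]} {N k : ℕ}
    {w : F} (hw : w ≠ 0) (hf : f.natDegree ≤ N) (hdvd : (X - C w) ^ k ∣ f) :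
    (X - C w⁻¹) ^ k ∣ reflect N f := by
  rcases eq_or_ne f 0 with rfl | hf0
  · simp
  obtain ⟨g, rfl⟩ := hdvd
  have hg0 : g ≠ 0 := right_ne_zero_of_mul hf0
  have hdeg : k + g.natDegree ≤ N := by
    rwa [natDegree_mul (pow_ne_zero _ (X_sub_C_ne_zero w)) hg0, natDegree_pow,
      natDegree_X_sub_C, mul_one] at hf
  have hlin : reflect 1 (X - C w) = C (-w) * (X - C w⁻¹) := by
    have hX : reflect 1 (X : F[X]) = 1 := by simp
    rw [reflect_sub, reflect_C, hX, mul_sub, ← C_mul, neg_mul, mul_inv_cancel₀ hw, C_neg, C_neg,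
      C_1]
    ring
  have hpow : ∀ n : ℕ, reflect n ((X - C w) ^ n) = (C (-w) * (X - C w⁻¹)) ^ n := by
    intro n
    induction n with
    | zero => simp
    | succ n ih =>
      rw [pow_succ, reflect_mul _ _ (by simp [natDegree_pow]) (natDegree_X_sub_C_le w), ih, hlin,
        pow_succ]
  rw [show N = k + (N - k) by omega, reflect_mul (F := k) (G := N - k) _ _
    (by simp [natDegree_pow]) (by omega), hpow, mul_pow]
  exact (dvd_mul_left _ _).mul_right _

theorem eval_reflect_map_conj {N : ℕ} {p : ℂ[X]} (hdeg : p.natDegree ≤ N) {z : ℂ}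
    (hz : ‖z‖ = 1) : (reflect N (p.map conj)).eval z = z ^ N * conj (p.eval z) := by
  have hz0 : z ≠ 0 := ne_zero_of_norm_eq_one hz
  have hzz : conj z * z = 1 := by rw [← Complex.inv_eq_conj hz, inv_mul_cancel₀ hz0]
  let _ : Invertible (conj z) := invertibleOfNonzero (by simpa using hz0)
  have h := eval₂_reflect_mul_pow (RingHom.id ℂ) (conj z) N (p.map conj)
    ((natDegree_map _).trans_le hdeg)
  rw [invOf_eq_inv, ← Complex.inv_eq_conj hz, inv_inv, Complex.inv_eq_conj hz, eval₂_id,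
    eval₂_id, eval_map_apply] at h
  rw [← h, mul_comm, mul_assoc, ← mul_pow, hzz, one_pow, mul_one]

/-- `p` has formal degree `N` and `z ^ N * conj (p (1 / conj z)) = p z`. -/
def IsSelfInversive (N : ℕ) (p : ℂ[X]) : Prop :=
  p.natDegree ≤ N ∧ reflect N (p.map conj) = p

theorem isSelfInversive_of_eval {N : ℕ} {p : ℂ[X]} (hdeg : p.natDegree ≤ N)
    (h : ∀ z : ℂ, ‖z‖ = 1 → z ^ N * conj (p.eval z) = p.eval z) : IsSelfInversive N p :=
  ⟨hdeg, eq_of_infinite_eval_eq _ _ <| Complex.infinite_setOf_norm_eq_one.mono fun z hz => by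
    rw [Set.mem_ofPred_eq, eval_reflect_map_conj hdeg hz, h z hz]⟩

theorem norm_multiset_prod {α : Type*} [NormedField α] (m : Multiset α) :
    ‖m.prod‖ = (m.map (‖·‖)).prod := by
  simpa using map_multiset_prod (normHom : α →*₀ ℝ) m

noncomputable def innerRoots (p : ℂ[X]) : Multiset ℂ :=
  p.roots.filter fun w => w ≠ 0 ∧ ‖w‖ < 1

namespace IsSelfInversive

variable {N : ℕ} {p : ℂ[X]}

theorem rootMultiplicity_le (hp : IsSelfInversive N p) {w : ℂ} (hw : w ≠ 0) :
    p.rootMultiplicity w ≤ p.rootMultiplicity (circleInversion w) := by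
  rcases eq_or_ne p 0 with rfl | hp0
  · simp
  have hdvd := Polynomial.map_dvd conj (pow_rootMultiplicity_dvd p w)
  rw [Polynomial.map_pow, Polynomial.map_sub, map_X, map_C] at hdvd
  have := pow_X_sub_C_inv_dvd_reflect (by simpa using hw) ((natDegree_map _).trans_le hp.1)
    hdvd
  rwa [hp.2, ← le_rootMultiplicity_iff hp0] at this

theorem roots_map_circleInversion (hp : IsSelfInversive N p) :
    p.roots.map circleInversion = p.roots := by
  ext w
  conv_lhs => rw [← circleInversion_involutive w]
  rw [Multiset.count_map_eq_count' _ _ circleInversion_involutive.injective, count_roots,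
    count_roots]
  rcases eq_or_ne w 0 with rfl | hw
  · simp [circleInversion]
  refine le_antisymm ?_ (hp.rootMultiplicity_le hw)
  simpa [circleInversion_involutive w] using
    hp.rootMultiplicity_le (w := circleInversion w) (by simpa [circleInversion] using hw)

theorem filter_roots_one_lt_norm (hp : IsSelfInversive N p) :
    p.roots.filter (fun w => 1 < ‖w‖) =
      (innerRoots p).map circleInversion := by
  conv_lhs => rw [← hp.roots_map_circleInversion]
  rw [Multiset.filter_map, innerRoots]
  congr 1
  refine Multiset.filter_congr fun w _ => ?_
  simp [norm_circleInversion, one_lt_inv_iff₀]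

theorem two_mul_card_innerRoots_le (hp : IsSelfInversive N p) :
    2 * Multiset.card (innerRoots p) ≤ N := by
  have hinside :
      Multiset.card (innerRoots p) ≤ Multiset.card (p.roots.filter fun w => ¬1 < ‖w‖) :=
    Multiset.card_le_card <| p.roots.monotone_filter_right fun w hw => not_lt.mpr hw.2.le
  have hsplit := congrArg Multiset.card (Multiset.filter_add_not (fun w => 1 < ‖w‖) p.roots)
  rw [Multiset.card_add, hp.filter_roots_one_lt_norm, Multiset.card_map] at hsplit
  linarith [p.card_roots', hp.1]

theorem prod_map_norm_sub_roots (hp : IsSelfInversive N p)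
    (hT : ∀ z : ℂ, ‖z‖ = 1 → p.eval z ≠ 0) {z : ℂ} (hz : ‖z‖ = 1) :
    (p.roots.map fun w => ‖z - w‖).prod =
      ((innerRoots p).map fun w => ‖z - w‖).prod ^ 2 /
        ((innerRoots p).map (‖·‖)).prod := by
  have houter : ((p.roots.filter fun w => 1 < ‖w‖).map fun w => ‖z - w‖).prod =
      ((innerRoots p).map fun w => ‖z - w‖).prod / ((innerRoots p).map (‖·‖)).prod := by
    rw [hp.filter_roots_one_lt_norm, Multiset.map_map, ← Multiset.prod_map_div]
    refine congrArg _ (Multiset.map_congr rfl fun w hw => ?_)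
    exact norm_sub_circleInversion hz (Multiset.mem_filter.mp hw).2.1
  have hrest : ((p.roots.filter fun w => ¬1 < ‖w‖).map fun w => ‖z - w‖).prod =
      ((innerRoots p).map fun w => ‖z - w‖).prod := by
    rw [← Multiset.filter_add_not (fun w => w ≠ 0 ∧ ‖w‖ < 1) (p.roots.filter _),
      Multiset.filter_filter, Multiset.filter_filter, Multiset.map_add, Multiset.prod_add,
      Multiset.filter_congr fun w _ => and_iff_left_of_imp fun h => not_lt.mpr h.2.le]
    have hzero : ((p.roots.filter fun w => ¬(w ≠ 0 ∧ ‖w‖ < 1) ∧ ¬1 < ‖w‖).map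
        fun w => ‖z - w‖).prod = 1 := by
      refine Multiset.prod_eq_one fun x hx => ?_
      obtain ⟨w, hw, rfl⟩ := Multiset.mem_map.mp hx
      obtain ⟨hroot, hin, hout⟩ := Multiset.mem_filter.mp hw
      obtain rfl : w = 0 := by
        by_contra hw0
        exact hT w (le_antisymm (not_lt.mp hout) (not_lt.mp (hin ⟨hw0, ·⟩)))
          (mem_roots'.mp hroot).2
      rw [sub_zero, hz]
    rw [hzero, mul_one]
    rfl
  conv_lhs => rw [← Multiset.filter_add_not (fun w => 1 < ‖w‖) p.roots]
  rw [Multiset.map_add, Multiset.prod_add, houter, hrest]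
  ring

theorem exists_normSq_eq {K : ℕ} (hp : IsSelfInversive (2 * K) p)
    (hT : ∀ z : ℂ, ‖z‖ = 1 → p.eval z ≠ 0) :
    ∃ g : ℂ[X], g.natDegree ≤ K ∧
      ∀ z : ℂ, ‖z‖ = 1 → ‖p.eval z‖ = Complex.normSq (g.eval z) := by
  set t := ‖p.leadingCoeff‖ / ((innerRoots p).map (‖·‖)).prod
  have ht : 0 ≤ t :=
    div_nonneg (norm_nonneg _) (Multiset.prod_map_nonneg fun w _ => norm_nonneg w)
  refine ⟨C (√t : ℂ) * ((innerRoots p).map (X - C ·)).prod, ?_, fun z hz => ?_⟩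
  · have := hp.two_mul_card_innerRoots_le
    refine (natDegree_C_mul_le _ _).trans ?_
    rw [natDegree_multiset_prod_X_sub_C_eq_card]
    omega
  rw [(IsAlgClosed.splits p).eval_eq_prod_roots, norm_mul, norm_multiset_prod, Multiset.map_map,
    Function.comp_def, hp.prod_map_norm_sub_roots hT hz, Complex.normSq_eq_norm_sq, eval_mul,
    eval_C, eval_multiset_prod, norm_mul, norm_multiset_prod, Multiset.map_map, Multiset.map_map,
    mul_pow, Complex.norm_real, Real.norm_eq_abs, sq_abs, Real.sq_sqrt ht]
  simp only [Function.comp_def, eval_sub, eval_X, eval_C, t]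
  ring

end IsSelfInversive

noncomputable def trigPoly (K : ℕ) (b : ℤ → ℂ) (z : ℂ) : ℂ :=
  ∑ k ∈ Finset.Icc (-(K : ℤ)) K, b k * z ^ k

noncomputable def shiftPoly (K : ℕ) (b : ℤ → ℂ) : ℂ[X] :=
  ∑ k ∈ Finset.Icc (-(K : ℤ)) K, C (b k) * X ^ (k + K).toNat

section shiftPoly

variable (K : ℕ) (b : ℤ → ℂ)

theorem natDegree_shiftPoly_le : (shiftPoly K b).natDegree ≤ 2 * K :=
  natDegree_sum_le_of_forall_le _ _ fun k hk =>
    (natDegree_C_mul_X_pow_le _ _).trans (by have := Finset.mem_Icc.mp hk; omega)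

theorem eval_shiftPoly {z : ℂ} (hz : z ≠ 0) :
    (shiftPoly K b).eval z = z ^ K * trigPoly K b z := by
  rw [shiftPoly, trigPoly, eval_finsetSum, Finset.mul_sum]
  refine Finset.sum_congr rfl fun k hk => ?_
  have hk : ((k + K).toNat : ℤ) = k + K := by
    have := Finset.mem_Icc.mp hk
    omega
  rw [eval_mul, eval_C, eval_pow, eval_X, ← zpow_natCast, hk, zpow_add₀ hz, zpow_natCast]
  ring

theorem norm_eval_shiftPoly {z : ℂ} (hz : ‖z‖ = 1) :
    ‖(shiftPoly K b).eval z‖ = ‖trigPoly K b z‖ := by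
  rw [eval_shiftPoly K b (ne_zero_of_norm_eq_one hz), norm_mul, norm_pow, hz, one_pow, one_mul]

theorem isSelfInversive_shiftPoly
    (hreal : ∀ z : ℂ, ‖z‖ = 1 → conj (trigPoly K b z) = trigPoly K b z) :
    IsSelfInversive (2 * K) (shiftPoly K b) :=
  isSelfInversive_of_eval (natDegree_shiftPoly_le K b) fun z hz => by
    have hzK : z ^ K ≠ 0 := pow_ne_zero _ (ne_zero_of_norm_eq_one hz)
    rw [eval_shiftPoly K b (ne_zero_of_norm_eq_one hz), map_mul, map_pow, hreal z hz,
      ← Complex.inv_eq_conj hz, inv_pow, two_mul, pow_add]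
    field_simp

end shiftPoly

/-- **Fejér–Riesz theorem.** If the trigonometric polynomial
`q(z) = Σ_{|k| ≤ K} b_k z^k` is strictly positive on the unit circle, then there is a
polynomial `g(z) = Σ_{k=0}^{K} a_k z^k` with `q(z) = |g(z)|²` on the circle. -/
theorem fejer_riesz (K : ℕ) (b : ℤ → ℂ)
    (hpos : ∀ z : ℂ, ‖z‖ = 1 →
      ∃ r : ℝ, 0 < r ∧ ∑ k ∈ Finset.Icc (-(K : ℤ)) (K : ℤ), b k * z ^ k = (r : ℂ)) :
    ∃ a : ℕ → ℂ, ∀ z : ℂ, ‖z‖ = 1 →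
      ∑ k ∈ Finset.Icc (-(K : ℤ)) (K : ℤ), b k * z ^ k =
        (Complex.normSq (∑ k ∈ Finset.range (K + 1), a k * z ^ k) : ℂ) := by
  have hreal (z : ℂ) (hz : ‖z‖ = 1) : conj (trigPoly K b z) = trigPoly K b z := by
    obtain ⟨r, -, hr : trigPoly K b z = r⟩ := hpos z hz
    rw [hr, Complex.conj_ofReal]
  have hT (z : ℂ) (hz : ‖z‖ = 1) : (shiftPoly K b).eval z ≠ 0 := by
    obtain ⟨r, hr, hq : trigPoly K b z = r⟩ := hpos z hz
    rw [← norm_ne_zero_iff, norm_eval_shiftPoly K b hz, hq, Complex.norm_real]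
    exact norm_ne_zero_iff.mpr hr.ne'
  obtain ⟨g, hg, hgp⟩ := (isSelfInversive_shiftPoly K b hreal).exists_normSq_eq hT
  refine ⟨g.coeff, fun z hz => ?_⟩
  obtain ⟨r, hr, hq : trigPoly K b z = r⟩ := hpos z hz
  rw [← eval_eq_sum_range' (Nat.lt_succ_of_le hg), ← hgp z hz, norm_eval_shiftPoly K b hz]
  change trigPoly K b z = _
  rw [hq, Complex.norm_real, Real.norm_of_nonneg hr.le]
end

section
/- Let X be a compact Hausdorff space, θ : X → X a uniquely ergodic homeomorphism with invariant measure μ, and f : X → T continuous. Then the set of integers n ∈ ℤ for which the cohomological equation g(θ(x)) f(x)^n = g(x) admits a nontrivial continuous solution g ∈ C(X) (i.e., g not identically zero) is a subgroup of ℤ. -/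
/-!
A nonzero solution `g` at level `n` has `‖g‖` continuous and `θ`-invariant, because `|f| = 1`.
Under unique ergodicity such a function is constant: for each point `x`, a Banach limit of the
Birkhoff averages along the orbit of `x` is a normalized, positive, `θ`-invariant functional, hence
(Riesz–Markov–Kakutani) integration against an invariant probability measure, which is then the
unique one; it integrates an invariant `φ` to `φ x`, so `φ x = φ y` for all `x`, `y`.
Consequently nonzero solutions vanish nowhere, so the product of solutions at levels `m` and `n`
is a nonzero solution at level `m + n`; the conjugate of a solution at level `n` solves at level
`-n`, and `1` solves at level `0`.
-/

open MeasureTheory Filter Topology Set CompactlySupported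

section BirkhoffLimit

variable {X : Type*} (T : X → X) (x₀ : X)

local notation "𝒰" => ((Ultrafilter.of (atTop : Filter ℕ) : Ultrafilter ℕ) : Filter ℕ)

/-- A Banach limit of the Birkhoff averages of `φ` along the forward orbit of `x₀`: the limit is
taken along a fixed ultrafilter finer than `atTop`, so it exists for every bounded `φ` and is
linear in `φ`. -/
noncomputable def birkhoffLimit (φ : X → ℝ) : ℝ :=
  limUnder 𝒰 (birkhoffAverage ℝ T φ · x₀)

variable {T}

lemma norm_birkhoffAverage_le {φ : X → ℝ} {C : ℝ} (hC : ∀ x, ‖φ x‖ ≤ C) (n : ℕ) (x : X) :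
    ‖birkhoffAverage ℝ T φ n x‖ ≤ C := by
  rcases n.eq_zero_or_pos with rfl | hn
  · simpa using (norm_nonneg _).trans (hC x)
  have hsum : ‖birkhoffSum T φ n x‖ ≤ n * C := by
    simpa [birkhoffSum] using norm_sum_le_of_le (Finset.range n) fun k _ => hC (T^[k] x)
  rw [birkhoffAverage, norm_smul, norm_inv, Real.norm_natCast, inv_mul_le_iff₀ (by positivity)]
  exact hsum

lemma tendsto_birkhoffLimit {φ : X → ℝ} (hφ : Bornology.IsBounded (range φ)) :
    Tendsto (birkhoffAverage ℝ T φ · x₀) 𝒰 (𝓝 (birkhoffLimit T x₀ φ)) := by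
  obtain ⟨C, hC⟩ := isBounded_iff_forall_norm_le.mp hφ
  have hball : ∀ n, birkhoffAverage ℝ T φ n x₀ ∈ Metric.closedBall 0 C := fun n => by
    simpa using norm_birkhoffAverage_le (fun x => hC _ (mem_range_self x)) n x₀
  obtain ⟨a, -, ha⟩ := (isCompact_closedBall (0 : ℝ) C).ultrafilter_le_nhds
    ((Ultrafilter.of atTop).map (birkhoffAverage ℝ T φ · x₀))
    (le_principal_iff.mpr (Ultrafilter.mem_map.mpr (univ_mem' hball)))
  exact tendsto_nhds_limUnder ⟨a, ha⟩

lemma birkhoffLimit_eq_of_tendsto {φ : X → ℝ} {a : ℝ}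
    (h : Tendsto (birkhoffAverage ℝ T φ · x₀) 𝒰 (𝓝 a)) : birkhoffLimit T x₀ φ = a :=
  h.limUnder_eq

lemma birkhoffLimit_add {φ ψ : X → ℝ} (hφ : Bornology.IsBounded (range φ))
    (hψ : Bornology.IsBounded (range ψ)) :
    birkhoffLimit T x₀ (φ + ψ) = birkhoffLimit T x₀ φ + birkhoffLimit T x₀ ψ := by
  apply birkhoffLimit_eq_of_tendsto
  rw [birkhoffAverage_add]
  exact (tendsto_birkhoffLimit x₀ hφ).add (tendsto_birkhoffLimit x₀ hψ)

lemma birkhoffAverage_smul (c : ℝ) (φ : X → ℝ) (n : ℕ) (x : X) :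
    birkhoffAverage ℝ T (c • φ) n x = c * birkhoffAverage ℝ T φ n x := by
  simp only [birkhoffAverage, birkhoffSum, Pi.smul_apply, smul_eq_mul, ← Finset.mul_sum]
  ring

lemma birkhoffLimit_smul (c : ℝ) {φ : X → ℝ} (hφ : Bornology.IsBounded (range φ)) :
    birkhoffLimit T x₀ (c • φ) = c * birkhoffLimit T x₀ φ := by
  apply birkhoffLimit_eq_of_tendsto
  simpa only [birkhoffAverage_smul] using (tendsto_birkhoffLimit x₀ hφ).const_mul c

lemma birkhoffLimit_mono {φ ψ : X → ℝ} (hφ : Bornology.IsBounded (range φ))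
    (hψ : Bornology.IsBounded (range ψ)) (h : φ ≤ ψ) :
    birkhoffLimit T x₀ φ ≤ birkhoffLimit T x₀ ψ :=
  le_of_tendsto_of_tendsto' (tendsto_birkhoffLimit x₀ hφ) (tendsto_birkhoffLimit x₀ hψ)
    fun _ => smul_le_smul_of_nonneg_left (Finset.sum_le_sum fun k _ => h _) (by positivity)

lemma birkhoffAverage_comp_apply (φ : X → ℝ) (n : ℕ) (x : X) :
    birkhoffAverage ℝ T (φ ∘ T) n x = birkhoffAverage ℝ T φ n (T x) := by
  simp only [birkhoffAverage, birkhoffSum, Function.comp_apply, ← Function.iterate_succ_apply' T,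
    Function.iterate_succ_apply]

lemma birkhoffLimit_comp {φ : X → ℝ} (hφ : Bornology.IsBounded (range φ)) :
    birkhoffLimit T x₀ (φ ∘ T) = birkhoffLimit T x₀ φ := by
  apply birkhoffLimit_eq_of_tendsto
  have hdiff := (tendsto_birkhoffAverage_apply_sub_birkhoffAverage' ℝ hφ T x₀).mono_left
    (Ultrafilter.of_le atTop)
  simpa only [birkhoffAverage_comp_apply, sub_add_cancel, zero_add] using
    hdiff.add (tendsto_birkhoffLimit (T := T) x₀ hφ)

lemma birkhoffLimit_of_comp_eq {φ : X → ℝ} (hφ : φ ∘ T = φ) : birkhoffLimit T x₀ φ = φ x₀ :=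
  birkhoffLimit_eq_of_tendsto x₀ <| Tendsto.mono_left (tendsto_const_nhds.congr' <|
    (eventually_ne_atTop 0).mono fun _ hn =>
      (congrFun (birkhoffAverage_of_comp_eq ℝ hφ (Nat.cast_ne_zero.mpr hn)) x₀).symm)
    (Ultrafilter.of_le atTop)

end BirkhoffLimit

section KrylovBogolyubov

variable {X : Type*} [TopologicalSpace X]

lemma CompactlySupportedContinuousMap.isBounded_range (φ : C_c(X, ℝ)) :
    Bornology.IsBounded (range φ) :=
  (φ.hasCompactSupport.isCompact_range φ.continuous).isBounded

noncomputable def birkhoffFunctional (T : X → X) (x₀ : X) : C_c(X, ℝ) →ₚ[ℝ] ℝ where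
  toFun φ := birkhoffLimit T x₀ φ
  map_add' φ ψ := birkhoffLimit_add x₀ φ.isBounded_range ψ.isBounded_range
  map_smul' c φ := birkhoffLimit_smul x₀ c φ.isBounded_range
  monotone' φ ψ h := birkhoffLimit_mono x₀ φ.isBounded_range ψ.isBounded_range h

variable [CompactSpace X] [T2Space X] [MeasurableSpace X] [BorelSpace X]

theorem exists_invariant_probabilityMeasure_integral_eq (θ : X ≃ₜ X) (x₀ : X) :
    ∃ ν : Measure X, IsProbabilityMeasure ν ∧ (∀ A, MeasurableSet A → ν (θ ⁻¹' A) = ν A) ∧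
      ∀ φ : C(X, ℝ), φ ∘ θ = φ → ∫ x, φ x ∂ν = φ x₀ := by
  set ν := RealRMK.rieszMeasure (birkhoffFunctional θ x₀)
  have hν : ∀ φ : C(X, ℝ), ∫ x, φ x ∂ν = birkhoffLimit θ x₀ φ := fun φ =>
    RealRMK.integral_rieszMeasure _ (CompactlySupportedContinuousMap.continuousMapEquiv φ)
  have hνinv : ∀ φ : C(X, ℝ), φ ∘ θ = φ → ∫ x, φ x ∂ν = φ x₀ := fun φ hφ =>
    (hν φ).trans (birkhoffLimit_of_comp_eq x₀ hφ)
  have hmap : ν.map θ = ν := by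
    have : (ν.map θ).Regular := Measure.Regular.map θ
    refine Measure.ext_of_integral_eq_on_compactlySupported fun φ => ?_
    calc ∫ x, φ x ∂ν.map θ = ∫ x, φ (θ x) ∂ν :=
          integral_map θ.continuous.aemeasurable φ.continuous.aestronglyMeasurable
      _ = birkhoffLimit θ x₀ (φ ∘ θ) := hν ((φ : C(X, ℝ)).comp θ)
      _ = birkhoffLimit θ x₀ φ := birkhoffLimit_comp x₀ φ.isBounded_range
      _ = ∫ x, φ x ∂ν := (hν φ).symm
  refine ⟨ν, ⟨?_⟩, fun A hA => ?_, hνinv⟩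
  · have hreal : ν.real univ = 1 := by simpa using hνinv 1 rfl
    rwa [measureReal_def, ENNReal.toReal_eq_one_iff] at hreal
  · rw [← Measure.map_apply θ.continuous.measurable hA, hmap]

end KrylovBogolyubov

def IsUniquelyErgodic {X : Type*} [MeasurableSpace X] (θ : X → X) : Prop :=
  ∃! μ : Measure X, IsProbabilityMeasure μ ∧ ∀ A : Set X, MeasurableSet A → μ (θ ⁻¹' A) = μ A

theorem IsUniquelyErgodic.apply_eq_of_comp_eq {X : Type*} [TopologicalSpace X] [CompactSpace X]
    [T2Space X] [MeasurableSpace X] [BorelSpace X] {θ : X ≃ₜ X} (hθ : IsUniquelyErgodic θ)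
    (φ : X → ℝ) (hφc : Continuous φ) (hφ : φ ∘ θ = φ) (x y : X) : φ x = φ y := by
  obtain ⟨νx, hνx, hνx_inv, hνx_int⟩ := exists_invariant_probabilityMeasure_integral_eq θ x
  obtain ⟨νy, hνy, hνy_inv, hνy_int⟩ := exists_invariant_probabilityMeasure_integral_eq θ y
  obtain rfl : νx = νy := hθ.unique ⟨hνx, hνx_inv⟩ ⟨hνy, hνy_inv⟩
  exact (hνx_int ⟨φ, hφc⟩ hφ).symm.trans (hνy_int ⟨φ, hφc⟩ hφ)

section CohomologicalEquation

variable {X : Type*} [TopologicalSpace X] (θ : X → X) (f : X → Circle)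

def cohomologicalLevels : Set ℤ :=
  {n : ℤ | ∃ g : C(X, ℂ), g ≠ 0 ∧ ∀ x : X, g (θ x) * ((f x ^ n : Circle) : ℂ) = g x}

variable {θ f}

lemma norm_comp_eq_of_mul_eq {g : C(X, ℂ)} {n : ℤ}
    (hg : ∀ x, g (θ x) * ((f x ^ n : Circle) : ℂ) = g x) : (‖g ·‖) ∘ θ = (‖g ·‖) := by
  funext x
  simpa only [Function.comp_apply, norm_mul, Circle.norm_coe, mul_one] using congrArg norm (hg x)

lemma apply_ne_zero_of_mul_eq (hθ : ∀ φ : X → ℝ, Continuous φ → φ ∘ θ = φ → ∀ x y, φ x = φ y)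
    {g : C(X, ℂ)} (hg₀ : g ≠ 0) {n : ℤ} (hg : ∀ x, g (θ x) * ((f x ^ n : Circle) : ℂ) = g x)
    (x : X) : g x ≠ 0 := by
  obtain ⟨y, hy⟩ := DFunLike.ne_iff.mp hg₀
  have hxy : ‖g x‖ = ‖g y‖ :=
    hθ _ (continuous_norm.comp g.continuous) (norm_comp_eq_of_mul_eq hg) x y
  rw [← norm_ne_zero_iff, hxy, norm_ne_zero_iff]
  exact hy

lemma zero_mem_cohomologicalLevels [Nonempty X] : (0 : ℤ) ∈ cohomologicalLevels θ f :=
  ⟨1, one_ne_zero, fun x => by simp⟩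

lemma neg_mem_cohomologicalLevels {n : ℤ} (hn : n ∈ cohomologicalLevels θ f) :
    -n ∈ cohomologicalLevels θ f := by
  obtain ⟨g, hg₀, hg⟩ := hn
  refine ⟨star g, star_ne_zero.mpr hg₀, fun x => ?_⟩
  simp only [ContinuousMap.star_apply, Complex.star_def, zpow_neg, Circle.coe_inv_eq_conj,
    ← map_mul, hg x]

lemma add_mem_cohomologicalLevels
    (hθ : ∀ φ : X → ℝ, Continuous φ → φ ∘ θ = φ → ∀ x y, φ x = φ y) {m n : ℤ}
    (hm : m ∈ cohomologicalLevels θ f) (hn : n ∈ cohomologicalLevels θ f) :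
    m + n ∈ cohomologicalLevels θ f := by
  obtain ⟨g, hg₀, hg⟩ := hm
  obtain ⟨h, hh₀, hh⟩ := hn
  obtain ⟨x, hx⟩ := DFunLike.ne_iff.mp hg₀
  refine ⟨g * h, DFunLike.ne_iff.mpr ⟨x, mul_ne_zero hx (apply_ne_zero_of_mul_eq hθ hh₀ hh x)⟩,
    fun x => ?_⟩
  calc (g * h) (θ x) * ((f x ^ (m + n) : Circle) : ℂ)
      = (g (θ x) * ((f x ^ m : Circle) : ℂ)) * (h (θ x) * ((f x ^ n : Circle) : ℂ)) := by
        rw [zpow_add, Circle.coe_mul, ContinuousMap.mul_apply]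
        ring
    _ = (g * h) x := by rw [hg, hh, ContinuousMap.mul_apply]

def cohomologicalLevelsAddSubgroup [Nonempty X]
    (hθ : ∀ φ : X → ℝ, Continuous φ → φ ∘ θ = φ → ∀ x y, φ x = φ y) : AddSubgroup ℤ where
  carrier := cohomologicalLevels θ f
  zero_mem' := zero_mem_cohomologicalLevels
  add_mem' := add_mem_cohomologicalLevels hθ
  neg_mem' := neg_mem_cohomologicalLevels

end CohomologicalEquation

/-- For a uniquely ergodic homeomorphism `θ` and continuous `f : X → 𝕋`, the set of
integers `n` for which the continuous cohomological equation `g(θ x) f(x)^n = g(x)` has a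
nontrivial continuous solution is a subgroup of `ℤ`. -/
theorem cohomological_levels_subgroup {X : Type*} [TopologicalSpace X] [CompactSpace X]
    [T2Space X] [MeasurableSpace X] [BorelSpace X] (θ : X ≃ₜ X)
    (hue : ∃! μ : Measure X, IsProbabilityMeasure μ ∧
      ∀ A : Set X, MeasurableSet A → μ (θ ⁻¹' A) = μ A)
    (f : C(X, Circle)) :
    ∃ H : AddSubgroup ℤ, (H : Set ℤ) =
      {n : ℤ | ∃ g : C(X, ℂ), g ≠ 0 ∧
        ∀ x : X, g (θ x) * ((f x ^ n : Circle) : ℂ) = g x} := by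
  obtain ⟨μ, hμ, -⟩ := hue.exists
  have : Nonempty X := nonempty_of_isProbabilityMeasure μ
  exact ⟨cohomologicalLevelsAddSubgroup (f := f) (IsUniquelyErgodic.apply_eq_of_comp_eq hue), rfl⟩
end

section
/- Let X be a compact Hausdorff space, θ : X → X a homeomorphism with a θ-invariant ergodic probability measure μ, f : X → T continuous, and n ∈ ℤ. If g₁, g₂ ∈ L^∞(X, μ) both satisfy g(θ(x)) f(x)^n = g(x) μ-a.e., and g₁ is not μ-a.e. zero, then g₂ = c · g₁ μ-a.e. for some constant c ∈ ℂ. -/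
/-!
The modulus `‖g₁‖` of a solution is invariant under `θ`, hence a.e. constant by ergodicity; that
constant is nonzero because `g₁` is not a.e. zero, so `g₁` vanishes almost nowhere. Dividing the
two equations, the multiplier `f ^ n` cancels and `g₂ / g₁` is invariant, hence a.e. a constant `c`.
-/

open MeasureTheory Filter

section

variable {α : Type*} [MeasurableSpace α] {μ : Measure α} {e : α → α}

theorem norm_comp_ae_eq_of_ae_comp_mul_circle_eq {g : α → ℂ} {u : α → Circle}
    (h : ∀ᵐ x ∂μ, g (e x) * (u x : ℂ) = g x) :
    (fun x => ‖g x‖) ∘ e =ᵐ[μ] fun x => ‖g x‖ := by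
  filter_upwards [h] with x hx
  simpa [Circle.norm_coe] using congrArg norm hx

theorem div_comp_ae_eq_of_ae_comp_mul_eq {G₀ : Type*} [CommGroupWithZero G₀] {g₁ g₂ u : α → G₀}
    (h₁ : ∀ᵐ x ∂μ, g₁ (e x) * u x = g₁ x) (h₂ : ∀ᵐ x ∂μ, g₂ (e x) * u x = g₂ x)
    (hne : ∀ᵐ x ∂μ, g₁ x ≠ 0) :
    (fun x => g₂ x / g₁ x) ∘ e =ᵐ[μ] fun x => g₂ x / g₁ x := by
  filter_upwards [h₁, h₂, hne] with x hx₁ hx₂ hx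
  have hu : u x ≠ 0 := right_ne_zero_of_mul (hx₁ ▸ hx)
  rw [Function.comp_apply, ← hx₁, ← hx₂, mul_div_mul_right _ _ hu]

namespace QuasiErgodic

theorem ae_ne_zero_of_norm_comp_ae_eq {E : Type*} [NormedAddCommGroup E] {g : α → E}
    (h : QuasiErgodic e μ) (hg : AEStronglyMeasurable g μ)
    (hinv : (fun x => ‖g x‖) ∘ e =ᵐ[μ] fun x => ‖g x‖) (hnz : ¬ g =ᵐ[μ] 0) :
    ∀ᵐ x ∂μ, g x ≠ 0 := by
  obtain ⟨r, hr⟩ := h.ae_eq_const_of_ae_eq_comp_ae hg.norm hinv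
  have hr₀ : r ≠ 0 := by
    rintro rfl
    exact hnz (hr.mono fun x hx => norm_eq_zero.mp hx)
  filter_upwards [hr] with x hx hx₀
  exact hr₀ (by simpa [hx₀] using hx.symm)

theorem exists_ae_eq_const_mul_of_ae_comp_mul_eq {g₁ g₂ u : α → ℂ} (h : QuasiErgodic e μ)
    (hg₁ : AEStronglyMeasurable g₁ μ) (hg₂ : AEStronglyMeasurable g₂ μ)
    (h₁ : ∀ᵐ x ∂μ, g₁ (e x) * u x = g₁ x) (h₂ : ∀ᵐ x ∂μ, g₂ (e x) * u x = g₂ x)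
    (hne : ∀ᵐ x ∂μ, g₁ x ≠ 0) :
    ∃ c : ℂ, g₂ =ᵐ[μ] fun x => c * g₁ x := by
  obtain ⟨c, hc⟩ := h.ae_eq_const_of_ae_eq_comp_ae
    (hg₂.aemeasurable.div hg₁.aemeasurable).aestronglyMeasurable
    (div_comp_ae_eq_of_ae_comp_mul_eq h₁ h₂ hne)
  refine ⟨c, ?_⟩
  filter_upwards [hc, hne] with x hx hx₀
  exact (div_eq_iff hx₀).mp hx

end QuasiErgodic

end

theorem cohomological_solution_unique_general {X : Type*} [TopologicalSpace X] [MeasurableSpace X]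
    (θ : X ≃ₜ X) (μ : Measure X) (herg : Ergodic θ μ)
    (f : C(X, Circle)) (n : ℤ) (g₁ g₂ : X → ℂ)
    (h₁m : MemLp g₁ ⊤ μ) (h₂m : MemLp g₂ ⊤ μ)
    (h₁ : ∀ᵐ x ∂μ, g₁ (θ x) * ((f x ^ n : Circle) : ℂ) = g₁ x)
    (h₂ : ∀ᵐ x ∂μ, g₂ (θ x) * ((f x ^ n : Circle) : ℂ) = g₂ x)
    (hnz : ¬ g₁ =ᵐ[μ] 0) :
    ∃ c : ℂ, g₂ =ᵐ[μ] fun x => c * g₁ x := by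
  have hne := herg.quasiErgodic.ae_ne_zero_of_norm_comp_ae_eq h₁m.aestronglyMeasurable
    (norm_comp_ae_eq_of_ae_comp_mul_circle_eq h₁) hnz
  exact herg.quasiErgodic.exists_ae_eq_const_mul_of_ae_comp_mul_eq h₁m.aestronglyMeasurable
    h₂m.aestronglyMeasurable h₁ h₂ hne

/-- For an ergodic system, the solution in `L^∞(X, μ)` of the cohomological equation at a
fixed level `n` is unique up to a multiplicative constant. -/
theorem cohomological_solution_unique {X : Type*} [TopologicalSpace X] [CompactSpace X]
    [T2Space X] [MeasurableSpace X] [BorelSpace X]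
    (θ : X ≃ₜ X) (μ : Measure X) [IsProbabilityMeasure μ] (herg : Ergodic θ μ)
    (f : C(X, Circle)) (n : ℤ) (g₁ g₂ : X → ℂ)
    (h₁m : MemLp g₁ ⊤ μ) (h₂m : MemLp g₂ ⊤ μ)
    (h₁ : ∀ᵐ x ∂μ, g₁ (θ x) * ((f x ^ n : Circle) : ℂ) = g₁ x)
    (h₂ : ∀ᵐ x ∂μ, g₂ (θ x) * ((f x ^ n : Circle) : ℂ) = g₂ x)
    (hnz : ¬ g₁ =ᵐ[μ] 0) :
    ∃ c : ℂ, g₂ =ᵐ[μ] fun x => c * g₁ x :=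
  cohomological_solution_unique_general θ μ herg f n g₁ g₂ h₁m h₂m h₁ h₂ hnz
end

section
/- Let A be a unital C*-algebra and U ∈ A a unitary element such that whenever (λ_k)_{k∈ℤ} ∈ ℓ¹(ℤ) satisfies Σ_{k∈ℤ} λ_k U^k = 0, then λ_k = 0 for all k. Then the C*-subalgebra generated by U and the identity is *-isomorphic to C(T), via an isomorphism sending U^n to the character χ_n(z) = z^n for each n ∈ ℤ. -/
/-!
Since `U` is normal with spectrum in the circle, its continuous functional calculus is a
⋆-homomorphism `Φ : C(𝕋) → A` with `Φ χₙ = Uⁿ`; the only thing to show is that the spectrum is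
the whole circle, for then Gelfand duality identifies `C(σ(U)) = C(𝕋)` with the elemental
algebra. If `z₀ ∈ 𝕋` were not in the spectrum, take a `C²` bump `f` at `z₀` supported off the
spectrum. Two integrations by parts make its Fourier coefficients `O(1/n²)`, hence summable, so
`f = ∑ f̂(n) χₙ` in `C(𝕋)` and `0 = Φ f = ∑ f̂(n) Uⁿ`. The hypothesis forces `f̂ = 0`, i.e. `f = 0`,
contradicting `f z₀ ≠ 0`.
-/

/-- The character `z ↦ z^n` on the unit circle, as a continuous function. -/
noncomputable def circleChar (n : ℤ) : C(Circle, ℂ) :=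
  ⟨fun z => ((z ^ n : Circle) : ℂ), continuous_subtype_val.comp (continuous_zpow n)⟩

open Complex Real

theorem norm_fourierCoeffOn_le {a b : ℝ} (hab : a < b) {f : ℝ → ℂ} {M : ℝ}
    (hM : ∀ x ∈ Set.Icc a b, ‖f x‖ ≤ M) (n : ℤ) : ‖fourierCoeffOn hab f n‖ ≤ M := by
  have hbound : ∀ x ∈ Set.uIoc a b, ‖fourier (-n) (x : AddCircle (b - a)) • f x‖ ≤ M := by
    intro x hx
    rw [Set.uIoc_of_le hab.le] at hx
    rw [norm_smul, fourier_apply, Circle.norm_coe, one_mul]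
    exact hM x (Set.Ioc_subset_Icc_self hx)
  have hba : 0 < b - a := sub_pos.2 hab
  rw [fourierCoeffOn_eq_integral, norm_smul, Real.norm_of_nonneg (by positivity)]
  calc 1 / (b - a) * ‖∫ x in a..b, fourier (-n) (x : AddCircle (b - a)) • f x‖
      ≤ 1 / (b - a) * (M * |b - a|) := by
        gcongr
        exact intervalIntegral.norm_integral_le_of_norm_le_const hbound
    _ = M := by rw [abs_of_pos hba]; field_simp

theorem fourierCoeffOn_eq_of_contDiff_two {a b : ℝ} (hab : a < b) {f : ℝ → ℂ}
    (hf : ContDiff ℝ 2 f) (h₀ : f a = f b) (h₁ : deriv f a = deriv f b) {n : ℤ} (hn : n ≠ 0) :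
    fourierCoeffOn hab f n = (((b - a : ℝ) : ℂ) / (2 * π * I * n)) ^ 2 *
      fourierCoeffOn hab (deriv (deriv f)) n := by
  have hf' : Differentiable ℝ (deriv f) := hf.differentiable_deriv_two
  have hf'' : Continuous (deriv (deriv f)) := (hf.deriv' (n := 1)).continuous_deriv le_rfl
  rw [fourierCoeffOn_of_hasDerivAt hab hn (fun x _ => (hf.differentiable two_ne_zero x).hasDerivAt)
      ((hf.continuous_deriv one_le_two).intervalIntegrable _ _),
    fourierCoeffOn_of_hasDerivAt hab hn (fun x _ => (hf' x).hasDerivAt)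
      (hf''.intervalIntegrable _ _), h₀, h₁]
  have : (n : ℂ) ≠ 0 := Int.cast_ne_zero.2 hn
  push_cast
  field_simp
  ring

theorem summable_norm_fourierCoeffOn_of_contDiff_two {a b : ℝ} (hab : a < b) {f : ℝ → ℂ}
    (hf : ContDiff ℝ 2 f) (h₀ : f a = f b) (h₁ : deriv f a = deriv f b) :
    Summable fun n : ℤ => ‖fourierCoeffOn hab f n‖ := by
  obtain ⟨M, hM⟩ := isCompact_Icc.exists_bound_of_continuousOn
    ((hf.deriv' (n := 1)).continuous_deriv le_rfl).continuousOn (s := Set.Icc a b)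
  refine Summable.of_norm_bounded_eventually
    ((Real.summable_one_div_int_pow.2 one_lt_two).mul_left (((b - a) / (2 * π)) ^ 2 * M)) ?_
  filter_upwards [Filter.eventually_cofinite_ne 0] with n hn
  rw [norm_norm, fourierCoeffOn_eq_of_contDiff_two hab hf h₀ h₁ hn, norm_mul]
  calc _ ≤ ‖(((b - a : ℝ) : ℂ) / (2 * π * I * n)) ^ 2‖ * M := by
        gcongr; exact norm_fourierCoeffOn_le hab hM n
    _ = _ := by
        rw [norm_pow, norm_div, norm_mul, norm_mul, norm_mul, norm_real, norm_real, norm_I,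
          norm_intCast, Complex.norm_ofNat, Real.norm_of_nonneg (sub_pos.2 hab).le,
          Real.norm_of_nonneg pi_pos.le, div_pow, mul_pow, mul_one, sq_abs]
        ring

theorem Circle.dist_exp_exp_le (x y : ℝ) : dist (Circle.exp x) (Circle.exp y) ≤ |x - y| := by
  have h : (Circle.exp x : ℂ) - Circle.exp y =
      Circle.exp y * (Complex.exp (I * (x - y : ℝ)) - 1) := by
    rw [mul_sub, mul_one, Circle.coe_exp, Circle.coe_exp, ← Complex.exp_add]
    congr 2
    push_cast
    ring
  calc dist (Circle.exp x) (Circle.exp y) = ‖(Circle.exp x : ℂ) - Circle.exp y‖ :=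
        dist_eq_norm (E := ℂ) _ _
    _ ≤ ‖x - y‖ := by
      rw [h, norm_mul, Circle.norm_coe, one_mul]
      exact norm_exp_I_mul_ofReal_sub_one_le

theorem exists_addCircle_bump {T : ℝ} [hT : Fact (0 < T)] (t₀ : ℝ) {r : ℝ} (hr : 0 < r)
    (hrT : r < T / 2) :
    ∃ F : C(AddCircle T, ℂ), F t₀ ≠ 0 ∧
      (∀ x, F x ≠ 0 → ∃ y ∈ Metric.ball t₀ r, (y : AddCircle T) = x) ∧
      Summable fun n => ‖fourierCoeff F n‖ := by
  let φ : ContDiffBump t₀ := ⟨r / 2, r, by positivity, by linarith⟩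
  let g : ℝ → ℂ := fun x => (φ x : ℂ)
  have hg : ContDiff ℝ 2 g := ofRealCLM.contDiff.comp φ.contDiff
  have hsupp : Function.support g = Metric.ball t₀ r := by
    rw [← φ.support_eq]; exact Function.support_comp_eq ofReal ofReal_eq_zero φ
  have htsupp : tsupport g ⊆ Metric.closedBall t₀ r :=
    (tsupport_comp_subset ofReal_zero φ).trans φ.tsupport_eq.subset
  have hT0 := hT.out
  set a := t₀ - T / 2 with ha_def
  have hend : ∀ x, r < |x - t₀| → g x = 0 ∧ deriv g x = 0 := by
    intro x hx
    have hx' : x ∉ tsupport g := fun h => by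
      have := htsupp h; rw [Metric.mem_closedBall, Real.dist_eq] at this; linarith
    exact ⟨image_eq_zero_of_notMem_tsupport hx',
      Function.notMem_support.1 fun h => hx' (support_deriv_subset h)⟩
  have ha : r < |a - t₀| := by
    rwa [show a - t₀ = -(T / 2) by ring, abs_neg, abs_of_pos (by positivity)]
  have hb : r < |a + T - t₀| := by
    rwa [show a + T - t₀ = T / 2 by ring, abs_of_pos (by positivity)]
  -- `g` and `deriv g` vanish at both ends of `[a, a + T]`: the lift to the circle is continuous
  -- and the boundary terms of the integrations by parts cancel.
  refine ⟨⟨AddCircle.liftIco T a g, AddCircle.liftIco_continuous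
    ((hend a ha).1.trans (hend _ hb).1.symm) hg.continuous.continuousOn⟩, ?_, ?_, ?_⟩
  · rw [ContinuousMap.coe_mk, AddCircle.liftIco_coe_apply ⟨by linarith, by linarith⟩]
    simp [g, φ.one_of_mem_closedBall (Metric.mem_closedBall_self (by positivity))]
  · intro x hx
    let y := AddCircle.equivIco T a x
    have hy : ((y : ℝ) : AddCircle T) = x := (AddCircle.equivIco T a).symm_apply_apply x
    rw [← hy, ContinuousMap.coe_mk, AddCircle.liftIco_coe_apply y.2, ← Function.mem_support,
      hsupp] at hx
    exact ⟨y, hx, hy⟩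
  · simp only [ContinuousMap.coe_mk, fourierCoeff_liftIco_eq]
    exact summable_norm_fourierCoeffOn_of_contDiff_two _ hg
      ((hend a ha).1.trans (hend _ hb).1.symm) ((hend a ha).2.trans (hend _ hb).2.symm)

theorem exists_circle_bump {T : ℝ} [hT : Fact (0 < T)] (z₀ : Circle) {ε : ℝ} (hε : 0 < ε) :
    ∃ f : C(Circle, ℂ), f z₀ ≠ 0 ∧ (∀ z, f z ≠ 0 → dist z z₀ < ε) ∧
      Summable fun n => ‖fourierCoeff (f ∘ AddCircle.toCircle (T := T)) n‖ := by
  have hT0 := hT.out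
  set c := 2 * π / T
  have hc0 : 0 < c := by positivity
  set r := min (ε / c) (T / 2) / 2 with hr
  have hr0 : 0 < r := by positivity
  have hrε : c * r < ε := by
    have : r < ε / c := by rw [hr]; linarith [min_le_left (ε / c) (T / 2)]
    rwa [lt_div_iff₀' hc0] at this
  have hrT : r < T / 2 := by rw [hr]; linarith [min_le_right (ε / c) (T / 2)]
  let e := AddCircle.homeomorphCircle hT0.ne'
  have he (y : ℝ) : e y = Circle.exp (c * y) := by
    rw [AddCircle.homeomorphCircle_apply, AddCircle.toCircle_apply_mk]
  have hz₀ : e.symm z₀ = (arg z₀ / c : ℝ) := by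
    rw [e.symm_apply_eq, he, mul_div_cancel₀ _ hc0.ne', Circle.exp_arg]
  obtain ⟨F, hF₀, hFsupp, hFsum⟩ := exists_addCircle_bump (T := T) (arg z₀ / c) hr0 hrT
  refine ⟨F.comp (e.symm : C(Circle, AddCircle T)), ?_, ?_, ?_⟩
  · simpa [hz₀] using hF₀
  · intro z hz
    obtain ⟨y, hy, hyz⟩ := hFsupp _ hz
    rw [← e.eq_symm_apply.1 hyz, ← e.apply_symm_apply z₀, hz₀, he, he]
    rw [Metric.mem_ball, Real.dist_eq] at hy
    calc _ ≤ |c * y - c * (arg z₀ / c)| := Circle.dist_exp_exp_le _ _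
      _ = c * |y - arg z₀ / c| := by rw [← mul_sub, abs_mul, abs_of_pos hc0]
      _ < ε := lt_of_le_of_lt (by gcongr) hrε
  · convert hFsum using 4
    ext x
    simp [← AddCircle.homeomorphCircle_apply hT0.ne', e]

theorem circleChar_toCircle {T : ℝ} (n : ℤ) (x : AddCircle T) :
    circleChar n (AddCircle.toCircle x) = fourier n x := by
  simp [circleChar, AddCircle.toCircle_zsmul]

theorem hasSum_fourierCoeff_smul_circleChar {T : ℝ} [hT : Fact (0 < T)] (f : C(Circle, ℂ))
    (hf : Summable (fourierCoeff (f ∘ AddCircle.toCircle (T := T)))) :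
    HasSum (fun n => fourierCoeff (f ∘ AddCircle.toCircle (T := T)) n • circleChar n) f := by
  let e := AddCircle.homeomorphCircle hT.out.ne'
  have he (z : Circle) : AddCircle.toCircle (e.symm z) = z := by
    rw [← AddCircle.homeomorphCircle_apply hT.out.ne', e.apply_symm_apply]
  have h := (hasSum_fourier_series_of_summable
      (f := f.comp ⟨_, AddCircle.continuous_toCircle⟩) hf).map
    (ContinuousMap.compStarAlgHom' ℂ ℂ (e.symm : C(Circle, AddCircle T)))
    (ContinuousMap.continuous_precomp _)
  convert h using 1
  · ext n z
    change _ = fourierCoeff (f ∘ AddCircle.toCircle (T := T)) n • fourier n (e.symm z)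
    rw [← circleChar_toCircle, he]
    rfl
  · ext z
    simp [he]

namespace Unitary

variable {A : Type*} [CStarAlgebra A] (u : unitary A)

noncomputable def spectrumToCircle : C(spectrum ℂ (u : A), Circle) :=
  ⟨fun z => ⟨z, spectrum_subset_circle u z.2⟩, by fun_prop⟩

noncomputable def circleCFC : C(Circle, ℂ) →⋆ₐ[ℂ] A :=
  (cfcHom (coe_isStarNormal u)).comp (ContinuousMap.compStarAlgHom' ℂ ℂ (spectrumToCircle u))

theorem continuous_circleCFC : Continuous (circleCFC u) :=
  (cfcHom_continuous _).comp (ContinuousMap.continuous_precomp _)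

theorem circleCFC_circleChar (n : ℤ) :
    circleCFC u (circleChar n) = ((u ^ n : unitary A) : A) := by
  have hcont : ContinuousOn (fun z : ℂ => z ^ n) (spectrum ℂ (u : A)) :=
    (continuousOn_zpow₀ n).mono fun z hz =>
      ne_zero_of_mem_sphere one_ne_zero ⟨z, spectrum_subset_circle u hz⟩
  have hzpow := cfc_zpow (R := ℂ) (toUnits u) n
  rw [val_toUnits_apply, ← map_zpow, val_toUnits_apply, cfc_apply _ _ _ hcont] at hzpow
  rw [← hzpow]
  rfl

theorem circleCFC_eq_zero {f : C(Circle, ℂ)}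
    (hf : ∀ z : Circle, (z : ℂ) ∈ spectrum ℂ (u : A) → f z = 0) :
    circleCFC u f = 0 := by
  have : f.comp (spectrumToCircle u) = 0 := ContinuousMap.ext fun z => hf _ z.2
  simp [circleCFC, this]

theorem hasSum_circleCFC {T : ℝ} [Fact (0 < T)] {f : C(Circle, ℂ)}
    (hf : Summable (fourierCoeff (f ∘ AddCircle.toCircle (T := T)))) :
    HasSum (fun n => fourierCoeff (f ∘ AddCircle.toCircle (T := T)) n • ((u ^ n : unitary A) : A))
      (circleCFC u f) := by
  simpa only [Function.comp_def, map_smul, circleCFC_circleChar] using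
    (hasSum_fourierCoeff_smul_circleChar f hf).map _ (continuous_circleCFC u)

theorem spectrum_eq_sphere_of_summable_independent
    (hind : ∀ lam : ℤ → ℂ, Summable (fun k => ‖lam k‖) →
      ∑' k : ℤ, lam k • ((u ^ k : unitary A) : A) = 0 → ∀ k, lam k = 0) :
    spectrum ℂ (u : A) = Metric.sphere 0 1 := by
  refine (spectrum_subset_circle u).antisymm fun z₀ hz₀ => ?_
  by_contra hσ
  obtain ⟨ε, hε, hball⟩ := Metric.isOpen_iff.1 (spectrum.isClosed (u : A)).isOpen_compl z₀ hσ
  have : Fact ((0 : ℝ) < 1) := ⟨one_pos⟩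
  obtain ⟨f, hf₀, hfsupp, hfsum⟩ := exists_circle_bump (T := 1) ⟨z₀, hz₀⟩ hε
  have hfσ : circleCFC u f = 0 := circleCFC_eq_zero u fun z hz => by
    by_contra hfz
    exact hball (hfsupp z hfz) hz
  have hcoeff := hind _ hfsum ((hasSum_circleCFC u hfsum.of_norm).tsum_eq.trans hfσ)
  have hf : f = 0 := (hasSum_fourierCoeff_smul_circleChar f hfsum.of_norm).unique
    (by simp only [hcoeff, zero_smul]; exact hasSum_zero)
  exact hf₀ (DFunLike.congr_fun hf _)

end Unitary

/-- If `U` is a unitary in a unital C*-algebra whose integer powers are "ℓ¹-independent",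
then the C*-subalgebra generated by `U` and the identity is *-isomorphic to `C(𝕋)` via
an isomorphism sending the character `χ_n(z) = z^n` to `U^n`. -/
theorem elemental_iso_continuous_functions_circle
    {A : Type*} [NormedRing A] [StarRing A] [CStarRing A] [CompleteSpace A]
    [NormedAlgebra ℂ A] [StarModule ℂ A] (U : unitary A)
    (hind : ∀ lam : ℤ → ℂ, Summable (fun k => ‖lam k‖) →
      ∑' k : ℤ, lam k • ((U ^ k : unitary A) : A) = 0 → ∀ k, lam k = 0) :
    ∃ φ : C(Circle, ℂ) ≃⋆ₐ[ℂ] StarAlgebra.elemental ℂ ((U : A)),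
      ∀ n : ℤ, ((φ (circleChar n) : StarAlgebra.elemental ℂ ((U : A))) : A)
        = ((U ^ n : unitary A) : A) := by
  let _ : CStarAlgebra A := {}
  have hσ := Unitary.spectrum_eq_sphere_of_summable_independent U hind
  let h : spectrum ℂ (U : A) ≃ₜ Circle :=
    { toFun := Unitary.spectrumToCircle U
      invFun := fun z => ⟨z, hσ ▸ z.2⟩
      continuous_toFun := map_continuous _
      continuous_invFun := by fun_prop }
  refine ⟨(h.compStarAlgEquiv' ℂ ℂ).trans (continuousFunctionalCalculus (U : A)), fun n => ?_⟩
  rw [← Unitary.circleCFC_circleChar, Unitary.circleCFC, StarAlgHom.comp_apply,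
    cfcHom_eq_of_isStarNormal]
  rfl
end

section
/- Let ℤ_∞ be the one-point compactification of ℤ, θ₀ the shift l ↦ l+1 (fixing ∞), and f : ℤ_∞ → T defined by f(0) = −1 and f(l) = 1 for l ≠ 0 (including l = ∞). For n ∈ ℤ, the continuous cohomological equation g(θ₀(l)) f(l)^n = g(l) for all l ∈ ℤ_∞ has a nontrivial continuous solution g : ℤ_∞ → ℂ if and only if n is even. -/
/-!
For odd `n` the equation reads `g (l + 1) * f l = g l`, so on `ℤ` a solution is a constant `c`
on `l ≤ 0` and `-c` on `l ≥ 1`. Continuity at `∞` forces both constants to equal `g ∞`, so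
`c = 0`, and `g` vanishes on the dense subset `ℤ`. For even `n` the constants are solutions.
-/

/-- The shift on the one-point compactification of `ℤ`, fixing `∞`. -/
def shiftZ : OnePoint ℤ → OnePoint ℤ := OnePoint.map (· + 1)

/-- The function `f : ℤ_∞ → 𝕋` with `f(0) = -1` and `f(l) = 1` otherwise. -/
noncomputable def fSign : OnePoint ℤ → ℂ :=
  open scoped Classical in
  fun x => if x = ((0 : ℤ) : OnePoint ℤ) then -1 else 1

open Filter OnePoint

theorem Int.apply_eq_of_ge_of_succ_eq {α : Type*} {u : ℤ → α} {a : ℤ}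
    (h : ∀ k ≥ a, u (k + 1) = u k) (k : ℤ) (hk : a ≤ k) : u k = u a := by
  induction k, hk using Int.leInduction with
  | base => rfl
  | succ k hk ih => rw [h k hk, ih]

theorem Int.apply_eq_of_le_of_succ_eq {α : Type*} {u : ℤ → α} {a : ℤ}
    (h : ∀ k < a, u (k + 1) = u k) (k : ℤ) (hk : k ≤ a) : u k = u a := by
  induction k, hk using Int.leInductionDown with
  | base => rfl
  | pred k hk ih => rw [← ih, ← h (k - 1) (by omega), sub_add_cancel]

theorem OnePoint.apply_infty_eq_of_eventually_eq {X α : Type*} [TopologicalSpace X]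
    [TopologicalSpace α] [T2Space α] {l : Filter X} [l.NeBot] (hl : l ≤ coclosedCompact X)
    {g : OnePoint X → α} (hg : ContinuousAt g ∞) {c : α} (h : ∀ᶠ x : X in l, g x = c) :
    g ∞ = c :=
  tendsto_nhds_unique (hg.tendsto.comp (tendsto_coe_infty.mono_left hl))
    (tendsto_const_nhds.congr' (h.mono fun _ hx => hx.symm))

theorem shiftZ_coe (k : ℤ) : shiftZ k = ↑(k + 1) := rfl

theorem fSign_coe (k : ℤ) : fSign k = if k = 0 then -1 else 1 := by
  simp [fSign]

theorem fSign_zpow_of_even {n : ℤ} (hn : Even n) (l : OnePoint ℤ) : fSign l ^ n = 1 := by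
  unfold fSign
  split_ifs <;> simp [hn.neg_one_zpow]

theorem fSign_zpow_of_odd {n : ℤ} (hn : Odd n) (l : OnePoint ℤ) : fSign l ^ n = fSign l := by
  unfold fSign
  split_ifs <;> simp [hn.neg_one_zpow]

theorem eq_zero_of_apply_shiftZ_mul_fSign (g : C(OnePoint ℤ, ℂ))
    (hg : ∀ l, g (shiftZ l) * fSign l = g l) : g = 0 := by
  have step (k : ℤ) : g ↑(k + 1) * (if k = 0 then -1 else 1) = g k := by
    simpa only [shiftZ_coe, fSign_coe] using hg k
  have hpos := Int.apply_eq_of_ge_of_succ_eq (u := fun k : ℤ => g k) (a := 1)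
    fun k hk => by simpa [show k ≠ 0 by omega] using step k
  have hnonpos := Int.apply_eq_of_le_of_succ_eq (u := fun k : ℤ => g k) (a := 0)
    fun k hk => by simpa [show k ≠ 0 by omega] using step k
  have h_one : g ↑(1 : ℤ) = -g ↑(0 : ℤ) := by simpa [neg_eq_iff_eq_neg] using step 0
  have h_top : g ∞ = g ↑(1 : ℤ) := apply_infty_eq_of_eventually_eq
    (atTop_le_cocompact.trans_eq coclosedCompact_eq_cocompact.symm) g.continuous.continuousAt
    ((eventually_ge_atTop 1).mono hpos)
  have h_bot : g ∞ = g ↑(0 : ℤ) := apply_infty_eq_of_eventually_eq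
    (atBot_le_cocompact.trans_eq coclosedCompact_eq_cocompact.symm) g.continuous.continuousAt
    ((eventually_le_atBot 0).mono hnonpos)
  have h_zero : g ↑(0 : ℤ) = 0 := by
    have := h_bot.symm.trans (h_top.trans h_one)
    linear_combination this / 2
  have h_coe (k : ℤ) : g k = 0 := by
    rcases le_or_gt k 0 with hk | hk
    · exact (hnonpos k hk).trans h_zero
    · rw [hpos k hk, h_one, h_zero, neg_zero]
  exact DFunLike.coe_injective <|
    g.continuous.ext_on denseRange_coe continuous_const fun _ ⟨k, hk⟩ => hk ▸ h_coe k

/-- The continuous cohomological equation `g(θ₀(l)) f(l)^n = g(l)` on `ℤ_∞` has a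
nontrivial continuous solution iff `n` is even. -/
theorem continuous_cohomological_iff_even (n : ℤ) :
    (∃ g : C(OnePoint ℤ, ℂ), g ≠ 0 ∧
      ∀ l : OnePoint ℤ, g (shiftZ l) * (fSign l) ^ n = g l) ↔ Even n := by
  refine ⟨fun ⟨g, hg0, hg⟩ => ?_, fun hn => ⟨1, one_ne_zero, fun l => ?_⟩⟩
  · by_contra hn
    rw [Int.not_even_iff_odd] at hn
    exact hg0 (eq_zero_of_apply_shiftZ_mul_fSign g fun l => by
      rw [← fSign_zpow_of_odd hn, hg])
  · rw [fSign_zpow_of_even hn, mul_one, ContinuousMap.one_apply, ContinuousMap.one_apply]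
end
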